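/- arXiv:2111.06944 — 2 statements merged into one kernel-verified Lean document; each statement's English description precedes it below -/
import Mathlib

section
/- Let A be a real symmetric n×n matrix and i, j indices. If (exp(β·A))ᵢᵢ = (exp(β·A))ⱼⱼ for all β in some nonempty open interval of positive reals, then i and j are cospectral, i.e., (Aʳ)ᵢᵢ = (Aʳ)ⱼⱼ for all natural r. -/
/-!
The difference of the two diagonal entries of `exp (β • A)` is a real-analytic function of `β`;
vanishing on an open interval, it vanishes identically. Differentiating `r` times, using
`d/dβ exp (β • A) = A * exp (β • A)`, and evaluating at `β = 0` gives `(A ^ r) i i = (A ^ r) j j`.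
-/

open Matrix NormedSpace Filter Topology

section ExpSmul

variable {𝕂 𝔸 E : Type*} [RCLike 𝕂] [NormedRing 𝔸] [NormedAlgebra 𝕂 𝔸] [CompleteSpace 𝔸]
  [NormedAddCommGroup E] [NormedSpace 𝕂 E]

theorem analyticAt_exp_smul (x : 𝔸) (t : 𝕂) : AnalyticAt 𝕂 (fun u : 𝕂 => exp (u • x)) t :=
  (exp_analytic (t • x)).comp (f := fun u : 𝕂 => u • x)
    (((ContinuousLinearMap.id 𝕂 𝕂).smulRight x).analyticAt t)

theorem ContinuousLinearMap.map_exp_smul_eq_zero_of_eventually {L : 𝔸 →L[𝕂] E} {x : 𝔸}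
    {t₀ : 𝕂} (h : ∀ᶠ t in 𝓝 t₀, L (exp (t • x)) = 0) (t : 𝕂) : L (exp (t • x)) = 0 := by
  have hL : AnalyticOnNhd 𝕂 (fun u : 𝕂 => L (exp (u • x))) Set.univ :=
    fun u _ => L.analyticAt _ |>.comp (analyticAt_exp_smul x u)
  exact hL.eqOn_zero_of_preconnected_of_eventuallyEq_zero isPreconnected_univ
    (Set.mem_univ t₀) h (Set.mem_univ t)

theorem ContinuousLinearMap.map_pow_eq_zero_of_map_exp_smul_eq_zero {L : 𝔸 →L[𝕂] E} {x : 𝔸}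
    (h : ∀ t : 𝕂, L (exp (t • x)) = 0) (r : ℕ) : L (x ^ r) = 0 := by
  suffices ∀ t : 𝕂, L (x ^ r * exp (t • x)) = 0 by simpa using this 0
  induction r with
  | zero => simpa using h
  | succ r ih =>
    intro t
    have hderiv : HasDerivAt (fun u : 𝕂 => L (x ^ r * exp (u • x)))
        (L (x ^ (r + 1) * exp (t • x))) t := by
      rw [pow_succ, mul_assoc]
      exact L.hasFDerivAt.comp_hasDerivAt t ((hasDerivAt_exp_smul_const' x t).const_mul _)
    rw [funext ih] at hderiv
    exact hderiv.unique (hasDerivAt_const t 0)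

end ExpSmul

theorem cospectral_of_subgraphCentrality_eq_on_interval_general (n : ℕ)
    (A : Matrix (Fin n) (Fin n) ℝ) (i j : Fin n)
    (a b : ℝ) (hab : a < b)
    (heq : ∀ β ∈ Set.Ioo a b,
      (NormedSpace.exp (β • A)) i i = (NormedSpace.exp (β • A)) j j) :
    ∀ r : ℕ, (A ^ r) i i = (A ^ r) j j := by
  -- `exp` depends only on the topology, so any submultiplicative norm will do.
  let _ : NormedRing (Matrix (Fin n) (Fin n) ℝ) := Matrix.linftyOpNormedRing
  let _ : NormedAlgebra ℝ (Matrix (Fin n) (Fin n) ℝ) := Matrix.linftyOpNormedAlgebra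
  let L : Matrix (Fin n) (Fin n) ℝ →L[ℝ] ℝ :=
    (entryLinearMap ℝ ℝ i i - entryLinearMap ℝ ℝ j j).toContinuousLinearMap
  have hL (M : Matrix (Fin n) (Fin n) ℝ) : L M = M i i - M j j := rfl
  have hmid : (a + b) / 2 ∈ Set.Ioo a b := ⟨by linarith, by linarith⟩
  have hnear : ∀ᶠ β in 𝓝 ((a + b) / 2), L (exp (β • A)) = 0 := by
    filter_upwards [Ioo_mem_nhds hmid.1 hmid.2] with β hβ
    rw [hL, heq β hβ, sub_self]
  intro r
  rw [← sub_eq_zero, ← hL]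
  exact L.map_pow_eq_zero_of_map_exp_smul_eq_zero (L.map_exp_smul_eq_zero_of_eventually hnear) r

theorem cospectral_of_subgraphCentrality_eq_on_interval (n : ℕ)
    (A : Matrix (Fin n) (Fin n) ℝ) (hA : A.IsSymm) (i j : Fin n)
    (a b : ℝ) (ha : 0 ≤ a) (hab : a < b)
    (heq : ∀ β ∈ Set.Ioo a b,
      (NormedSpace.exp (β • A)) i i = (NormedSpace.exp (β • A)) j j) :
    ∀ r : ℕ, (A ^ r) i i = (A ^ r) j j :=
  cospectral_of_subgraphCentrality_eq_on_interval_general n A i j a b hab heq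
end

section
/- Let A be a real symmetric n×n matrix with distinct eigenvalues μ₁, ..., μ_d and spectral projections E_h, and let i, j be indices. If the coefficient vector x_h = (E_h)ᵢᵢ − (E_h)ⱼⱼ (h = 1, ..., d) has exactly s sign changes (ignoring zero entries), then the function g(β) = (exp(βA))ᵢᵢ − (exp(βA))ⱼⱼ has at most s zeros in (0, ∞), provided i and j are not cospectral. -/
open Matrix

/-- The number of sign changes of a real vector, ignoring zero entries. -/
noncomputable def signChanges (d : ℕ) (x : Fin d → ℝ) : ℕ :=
  let l := (List.ofFn x).filter (· ≠ 0)
  ((l.zip l.tail).filter (fun p => p.1 * p.2 < 0)).length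

/-!
Writing `A = ∑ μ_h E_h`, one gets `(exp βA)ᵢᵢ - (exp βA)ⱼⱼ = ∑ x_h e^{μ_h β}`, and `x ≠ 0`
because otherwise every `(Aʳ)ᵢᵢ - (Aʳ)ⱼⱼ = ∑ μ_hʳ x_h` would vanish. The bound on the zeros is
Descartes' rule of signs for exponential sums, proved by induction on the number of sign changes:
at a sign change between consecutive nonzero coefficients choose `c` strictly between the two
exponents; the derivative of `e^{-ct} f(t)` is an exponential sum with coefficients
`x_h (μ_h - c)`, which have one sign change fewer, and by Rolle's theorem `f` has at most one
zero more than that derivative.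
-/

noncomputable def signVariations (l : List ℝ) : ℕ :=
  ((l.zip l.tail).filter fun p => p.1 * p.2 < 0).length

@[simp] lemma signVariations_nil : signVariations [] = 0 := rfl

@[simp] lemma signVariations_singleton (a : ℝ) : signVariations [a] = 0 := rfl

lemma signVariations_cons_cons (a b : ℝ) (l : List ℝ) :
    signVariations (a :: b :: l) = (if a * b < 0 then 1 else 0) + signVariations (b :: l) := by
  by_cases h : a * b < 0 <;> simp [signVariations, h, add_comm]

section Lists

variable {α : Type*}

lemma signVariations_map_append (f : α → ℝ) (u : List α) (a b : α) (v : List α) :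
    signVariations ((u ++ a :: b :: v).map f) = signVariations ((u ++ [a]).map f) +
      (if f a * f b < 0 then 1 else 0) + signVariations ((b :: v).map f) := by
  induction u with
  | nil => simp [signVariations_cons_cons]
  | cons c u ih =>
    cases u with
    | nil => simp [signVariations_cons_cons, add_assoc]
    | cons e u =>
      simp only [List.cons_append, List.map_cons, signVariations_cons_cons] at ih ⊢
      omega

lemma exists_append_of_signVariations_map_pos {f : α → ℝ} {l : List α}
    (h : 0 < signVariations (l.map f)) : ∃ u a b v, l = u ++ a :: b :: v ∧ f a * f b < 0 := by
  induction l with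
  | nil => simp at h
  | cons a l ih =>
    cases l with
    | nil => simp at h
    | cons b l =>
      by_cases hab : f a * f b < 0
      · exact ⟨[], a, b, l, rfl, hab⟩
      · rw [List.map_cons, List.map_cons, signVariations_cons_cons, if_neg hab, zero_add] at h
        obtain ⟨u, a', b', v, hl, h'⟩ := ih h
        exact ⟨a :: u, a', b', v, by rw [hl, List.cons_append], h'⟩

lemma mul_pos_of_signVariations_eq_zero {a : ℝ} {l : List ℝ} (h : signVariations (a :: l) = 0)
    (hne : ∀ x ∈ a :: l, x ≠ 0) : ∀ x ∈ l, 0 < a * x := by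
  induction l generalizing a with
  | nil => simp
  | cons b l ih =>
    rw [signVariations_cons_cons] at h
    have hab : 0 < a * b := by
      have := mul_ne_zero (hne a (by simp)) (hne b (by simp))
      split_ifs at h with h' <;> [omega; exact lt_of_le_of_ne (not_lt.mp h') this.symm]
    have hb := ih (by omega) (fun x hx => hne x (List.mem_cons_of_mem a hx))
    intro x hx
    rcases List.mem_cons.mp hx with rfl | hx
    · exact hab
    · have := mul_pos hab (hb x hx)
      nlinarith [mul_self_nonneg b]

lemma signVariations_map_mul (f w : α → ℝ) {l : List α}
    (hw : ∀ r ∈ l, ∀ r' ∈ l, 0 < w r * w r') :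
    signVariations (l.map fun r => f r * w r) = signVariations (l.map f) := by
  induction l with
  | nil => rfl
  | cons a l ih =>
    cases l with
    | nil => rfl
    | cons b l =>
      simp only [List.map_cons, signVariations_cons_cons] at ih ⊢
      rw [ih (fun r hr r' hr' => hw r (List.mem_cons_of_mem a hr) r' (List.mem_cons_of_mem a hr'))]
      have hab := hw a (by simp) b (by simp)
      have : f a * w a * (f b * w b) = f a * f b * (w a * w b) := by ring
      simp [this, mul_neg_iff, hab, hab.not_gt]

lemma signVariations_map_mul_add_one (f w : α → ℝ) {u v : List α} {a b : α}
    (hu : ∀ r ∈ u ++ [a], w r < 0) (hv : ∀ r ∈ b :: v, 0 < w r) (hab : f a * f b < 0) :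
    signVariations ((u ++ a :: b :: v).map fun r => f r * w r) + 1 =
      signVariations ((u ++ a :: b :: v).map f) := by
  have hab' : ¬ f a * w a * (f b * w b) < 0 := by
    have := mul_pos_of_neg_of_neg hab (mul_neg_of_neg_of_pos (hu a (by simp)) (hv b (by simp)))
    linarith [show f a * w a * (f b * w b) = f a * f b * (w a * w b) by ring]
  rw [signVariations_map_append, signVariations_map_append (f := f), if_neg hab', if_pos hab,
    signVariations_map_mul f w fun r hr r' hr' => mul_pos_of_neg_of_neg (hu r hr) (hu r' hr'),
    signVariations_map_mul f w fun r hr r' hr' => mul_pos (hv r hr) (hv r' hr')]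
  omega

lemma exists_separating_of_pairwise {g : α → ℝ} {u v : List α} {a b : α}
    (h : (u ++ a :: b :: v).Pairwise fun r r' => g r < g r') :
    ∃ c, (∀ r ∈ u ++ [a], g r < c) ∧ ∀ r ∈ b :: v, c < g r := by
  rw [List.pairwise_append, List.pairwise_cons, List.pairwise_cons] at h
  obtain ⟨-, ⟨ha, hb, -⟩, hu⟩ := h
  obtain ⟨c, hac, hcb⟩ := exists_between (ha b (by simp))
  refine ⟨c, ?_, ?_⟩
  · simp only [List.mem_append, List.mem_singleton]
    rintro r (hr | rfl)
    exacts [(hu r hr a (by simp)).trans hac, hac]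
  · simp only [List.mem_cons]
    rintro r (rfl | hr)
    exacts [hcb, hcb.trans (hb r hr)]

end Lists

lemma ENat.le_add_one_of_forall {a b : ℕ∞} (h : ∀ k : ℕ, (k + 1 : ℕ∞) ≤ a → (k : ℕ∞) ≤ b) :
    a ≤ b + 1 := by
  induction a using ENat.recTopCoe with
  | top =>
    have : b = ⊤ := ENat.eq_top_iff_forall_ge.mpr fun k => h k le_top
    simp [this]
  | coe n =>
    cases n with
    | zero => simp
    | succ k =>
      push_cast
      gcongr
      exact h k (by push_cast; rfl)

lemma encard_zeros_le_encard_zeros_deriv_add_one {f f' : ℝ → ℝ}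
    (hf : ∀ t, HasDerivAt f (f' t) t) :
    {t | f t = 0}.encard ≤ {t | f' t = 0}.encard + 1 := by
  refine ENat.le_add_one_of_forall fun k hk => ?_
  obtain ⟨s, hs, hcard⟩ := Set.exists_subset_encard_eq hk
  have hfin : s.Finite := Set.finite_of_encard_eq_coe hcard
  have hcard' : hfin.toFinset.card = k + 1 := by
    rw [hfin.encard_eq_coe_toFinset_card] at hcard; exact_mod_cast hcard
  let e := hfin.toFinset.orderEmbOfFin hcard'
  have he : ∀ i, f (e i) = 0 := fun i =>
    hs (hfin.mem_toFinset.mp (Finset.orderEmbOfFin_mem _ _ i))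
  have hrolle : ∀ i : Fin k, ∃ c ∈ Set.Ioo (e i.castSucc) (e i.succ), f' c = 0 := fun i =>
    exists_hasDerivAt_eq_zero (e.strictMono i.castSucc_lt_succ)
      (fun x _ => (hf x).continuousAt.continuousWithinAt) ((he _).trans (he _).symm)
      (fun x _ => hf x)
  choose c hc hc0 using hrolle
  have hmono : StrictMono c := by
    intro i j hij
    calc c i < e i.succ := (hc i).2
      _ ≤ e j.castSucc := e.monotone (Fin.succ_le_castSucc_iff.mpr hij)
      _ < c j := (hc j).1
  calc (k : ℕ∞) ≤ (Set.range c).encard := by simpa using hmono.injective.encard_range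
    _ ≤ _ := Set.encard_le_encard (Set.range_subset_iff.mpr hc0)

noncomputable def expSum (L : List (ℝ × ℝ)) (t : ℝ) : ℝ :=
  (L.map fun p => p.1 * Real.exp (p.2 * t)).sum

@[simp] lemma expSum_nil : expSum [] = 0 := rfl

@[simp] lemma expSum_cons (p : ℝ × ℝ) (L : List (ℝ × ℝ)) (t : ℝ) :
    expSum (p :: L) t = p.1 * Real.exp (p.2 * t) + expSum L t := rfl

lemma hasDerivAt_expSum (L : List (ℝ × ℝ)) (t : ℝ) :
    HasDerivAt (expSum L) (expSum (L.map fun p => (p.1 * p.2, p.2)) t) t := by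
  induction L with
  | nil => exact hasDerivAt_const t 0
  | cons p L ih =>
    have hp : HasDerivAt (fun t => p.1 * Real.exp (p.2 * t))
        (p.1 * p.2 * Real.exp (p.2 * t)) t := by
      simpa [mul_comm, mul_assoc, mul_left_comm] using
        (((hasDerivAt_id t).const_mul p.2).exp).const_mul p.1
    exact (hp.add ih).congr_of_eventuallyEq (.of_forall fun t => expSum_cons p L t)

lemma expSum_map_sub (L : List (ℝ × ℝ)) (c t : ℝ) :
    expSum (L.map fun p => (p.1, p.2 - c)) t = Real.exp (-(c * t)) * expSum L t := by
  induction L with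
  | nil => simp
  | cons p L ih =>
    rw [List.map_cons, expSum_cons, expSum_cons, ih,
      show (p.2 - c) * t = -(c * t) + p.2 * t by ring, Real.exp_add]
    ring

lemma expSum_filter (L : List (ℝ × ℝ)) : expSum (L.filter fun p => p.1 ≠ 0) = expSum L := by
  funext t
  induction L with
  | nil => rfl
  | cons p L ih =>
    by_cases hp : p.1 = 0
    · rw [List.filter_cons_of_neg (by simpa using hp), ih, expSum_cons, hp, zero_mul, zero_add]
    · rw [List.filter_cons_of_pos (by simpa using hp), expSum_cons, expSum_cons, ih]

lemma mul_expSum_pos {L : List (ℝ × ℝ)} {c : ℝ} (hL : L ≠ []) (hc : ∀ p ∈ L, 0 < c * p.1)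
    (t : ℝ) : 0 < c * expSum L t := by
  rw [expSum, ← List.sum_map_mul_left]
  refine List.sum_pos _ (fun y hy => ?_) (by simpa using hL)
  obtain ⟨p, hp, rfl⟩ := List.mem_map.mp hy
  rw [← mul_assoc]
  exact mul_pos (hc p hp) (Real.exp_pos _)

lemma expSum_ne_zero_of_signVariations_eq_zero {L : List (ℝ × ℝ)} (hL : L ≠ [])
    (hc : ∀ p ∈ L, p.1 ≠ 0) (hs : signVariations (L.map Prod.fst) = 0) (t : ℝ) :
    expSum L t ≠ 0 := by
  obtain ⟨p, L', rfl⟩ := List.exists_cons_of_ne_nil hL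
  have hpos := mul_pos_of_signVariations_eq_zero hs (by simpa using hc)
  refine right_ne_zero_of_mul (mul_expSum_pos hL (c := p.1) (fun q hq => ?_) t).ne'
  rcases List.mem_cons.mp hq with rfl | hq
  · exact mul_self_pos.mpr (hc q (by simp))
  · exact hpos q.1 (List.mem_map_of_mem hq)

lemma encard_zeros_expSum_le_encard_zeros_mul_sub_add_one (L : List (ℝ × ℝ)) (c : ℝ) :
    {t | expSum L t = 0}.encard ≤
      {t | expSum (L.map fun r => (r.1 * (r.2 - c), r.2 - c)) t = 0}.encard + 1 := by
  have hderiv : ∀ t, HasDerivAt (expSum (L.map fun r => (r.1, r.2 - c)))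
      (expSum (L.map fun r => (r.1 * (r.2 - c), r.2 - c)) t) t := fun t => by
    simpa only [List.map_map, Function.comp_def] using
      hasDerivAt_expSum (L.map fun r => (r.1, r.2 - c)) t
  calc {t | expSum L t = 0}.encard
      = {t | expSum (L.map fun r => (r.1, r.2 - c)) t = 0}.encard := by
        simp [expSum_map_sub, Real.exp_ne_zero]
    _ ≤ _ := encard_zeros_le_encard_zeros_deriv_add_one hderiv

theorem encard_zeros_expSum_le_signVariations {L : List (ℝ × ℝ)} (hL : L ≠ [])
    (hc : ∀ p ∈ L, p.1 ≠ 0) (hμ : L.Pairwise fun p q => p.2 < q.2) :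
    {t | expSum L t = 0}.encard ≤ signVariations (L.map Prod.fst) := by
  induction hs : signVariations (L.map Prod.fst) generalizing L with
  | zero => simp [expSum_ne_zero_of_signVariations_eq_zero hL hc hs]
  | succ s ih =>
    obtain ⟨U, p, q, V, hLsplit, hpq⟩ :=
      exists_append_of_signVariations_map_pos (f := Prod.fst) (l := L) (by omega)
    obtain ⟨c, hlow, hhigh⟩ := exists_separating_of_pairwise (hLsplit ▸ hμ)
    have hne : ∀ r ∈ L, r.2 - c ≠ 0 := by
      intro r hr
      rw [hLsplit, show U ++ p :: q :: V = U ++ [p] ++ q :: V by simp, List.mem_append] at hr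
      rcases hr with hr | hr
      exacts [(sub_neg.mpr (hlow r hr)).ne, (sub_pos.mpr (hhigh r hr)).ne']
    set L' := L.map fun r => (r.1 * (r.2 - c), r.2 - c)
    have hs' : signVariations (L'.map Prod.fst) = s := by
      have := signVariations_map_mul_add_one Prod.fst (fun r => r.2 - c)
        (fun r hr => sub_neg.mpr (hlow r hr)) (fun r hr => sub_pos.mpr (hhigh r hr)) hpq
      rw [← hLsplit] at this
      simp only [L', List.map_map, Function.comp_def]
      omega
    have hL' : L' ≠ [] := by simpa [L'] using hL
    have hc' : ∀ r ∈ L', r.1 ≠ 0 := by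
      simp only [L', List.mem_map]
      rintro _ ⟨r, hr, rfl⟩
      exact mul_ne_zero (hc r hr) (hne r hr)
    have hμ' : L'.Pairwise fun p q => p.2 < q.2 :=
      List.pairwise_map.mpr (hμ.imp fun h => sub_lt_sub_right h c)
    calc {t | expSum L t = 0}.encard ≤ {t | expSum L' t = 0}.encard + 1 :=
          encard_zeros_expSum_le_encard_zeros_mul_sub_add_one L c
      _ ≤ s + 1 := by gcongr; exact ih hL' hc' hμ' hs'

lemma signChanges_eq_signVariations {d : ℕ} (x μ : Fin d → ℝ) :
    signChanges d x = signVariations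
      (((List.ofFn fun h => (x h, μ h)).filter fun p => p.1 ≠ 0).map Prod.fst) := by
  have : List.ofFn x = (List.ofFn fun h => (x h, μ h)).map Prod.fst := by
    rw [List.map_ofFn]; rfl
  rw [signChanges, this, List.filter_map]
  rfl

theorem encard_zeros_sum_exp_le_signChanges {d : ℕ} {x μ : Fin d → ℝ} (hx : x ≠ 0)
    (hμ : StrictMono μ) :
    {t | ∑ h, x h * Real.exp (μ h * t) = 0}.encard ≤ signChanges d x := by
  set L := (List.ofFn fun h => (x h, μ h)).filter fun p => p.1 ≠ 0 with hLdef
  have hsum : ∀ t, ∑ h, x h * Real.exp (μ h * t) = expSum L t := fun t => by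
    rw [hLdef, expSum_filter, expSum, List.map_ofFn, List.sum_ofFn]
    rfl
  obtain ⟨h, hh⟩ := Function.ne_iff.mp hx
  have hL : L ≠ [] := List.ne_nil_of_mem <|
    List.mem_filter.mpr ⟨List.mem_ofFn.mpr ⟨h, rfl⟩, by simpa using hh⟩
  have hc : ∀ p ∈ L, p.1 ≠ 0 := fun p hp => by simpa using (List.mem_filter.mp hp).2
  have hμL : L.Pairwise fun p q => p.2 < q.2 :=
    ((List.pairwise_ofFn (R := fun p q : ℝ × ℝ => p.2 < q.2)).mpr fun _ _ hij => hμ hij).filter _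
  simpa only [hsum, signChanges_eq_signVariations x μ] using
    encard_zeros_expSum_le_signVariations hL hc hμL

section Idempotents

variable {𝕜 R ι : Type*} [CommSemiring 𝕜] [Semiring R] [Algebra 𝕜 R] [Fintype ι] {e : ι → R}

lemma OrthogonalIdempotents.sum_smul_mul_sum_smul (he : OrthogonalIdempotents e) (a b : ι → 𝕜) :
    (∑ i, a i • e i) * (∑ i, b i • e i) = ∑ i, (a i * b i) • e i := by
  classical
  simp [Finset.sum_mul_sum, he.mul_eq, smul_smul, mul_comm]

lemma CompleteOrthogonalIdempotents.sum_smul_pow (he : CompleteOrthogonalIdempotents e)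
    (μ : ι → 𝕜) (n : ℕ) : (∑ i, μ i • e i) ^ n = ∑ i, μ i ^ n • e i := by
  induction n with
  | zero => simp [he.complete]
  | succ n ih => simp only [pow_succ, ih, he.sum_smul_mul_sum_smul]

end Idempotents

lemma CompleteOrthogonalIdempotents.exp_sum_smul {ι R : Type*} [Fintype ι] [Ring R] [Algebra ℝ R]
    [TopologicalSpace R] [IsTopologicalRing R] [ContinuousSMul ℝ R] [T2Space R] {e : ι → R}
    (he : CompleteOrthogonalIdempotents e) (μ : ι → ℝ) :
    NormedSpace.exp (∑ i, μ i • e i) = ∑ i, Real.exp (μ i) • e i := by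
  rw [NormedSpace.exp_eq_tsum ℝ]
  refine HasSum.tsum_eq ?_
  simp_rw [he.sum_smul_pow, Finset.smul_sum, smul_smul]
  refine hasSum_sum fun i _ => ?_
  rw [Real.exp_eq_exp_ℝ]
  exact (NormedSpace.exp_series_hasSum_exp' (𝕂 := ℝ) (μ i)).smul_const (e i)

lemma Matrix.sum_smul_apply_sub_apply {n ι : Type*} [Fintype ι] (c : ι → ℝ)
    (E : ι → Matrix n n ℝ) (i j : n) :
    (∑ h, c h • E h) i i - (∑ h, c h • E h) j j = ∑ h, c h * (E h i i - E h j j) := by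
  simp [Matrix.sum_apply, mul_sub, Finset.sum_sub_distrib]

theorem interlacing_values_le_signChanges_general (n d : ℕ)
    (A : Matrix (Fin n) (Fin n) ℝ)
    (μ : Fin d → ℝ) (hμ : StrictMono μ)
    (E : Fin d → Matrix (Fin n) (Fin n) ℝ)
    (hEorth : ∀ h k, h ≠ k → E h * E k = 0)
    (hEsum : ∑ h, E h = 1)
    (hdecomp : A = ∑ h, μ h • E h)
    (i j : Fin n)
    (hnc : ¬ ∀ r : ℕ, (A ^ r) i i = (A ^ r) j j) :
    {β : ℝ | 0 < β ∧ (NormedSpace.exp (β • A)) i i = (NormedSpace.exp (β • A)) j j}.Finite ∧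
    {β : ℝ | 0 < β ∧ (NormedSpace.exp (β • A)) i i = (NormedSpace.exp (β • A)) j j}.ncard
      ≤ signChanges d (fun h => (E h) i i - (E h) j j) := by
  have he : CompleteOrthogonalIdempotents E :=
    CompleteOrthogonalIdempotents.iff_ortho_complete.mpr ⟨fun h k => hEorth h k, hEsum⟩
  have hx : (fun h => E h i i - E h j j) ≠ 0 := by
    refine fun hx => hnc fun r => sub_eq_zero.mp ?_
    rw [hdecomp, he.sum_smul_pow, Matrix.sum_smul_apply_sub_apply]
    simp [funext_iff.mp hx]
  have hzeros : {β : ℝ | 0 < β ∧ (NormedSpace.exp (β • A)) i i = (NormedSpace.exp (β • A)) j j} ⊆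
      {t | ∑ h, (E h i i - E h j j) * Real.exp (μ h * t) = 0} := by
    rintro β ⟨-, hβ⟩
    rw [hdecomp, Finset.smul_sum] at hβ
    simp_rw [smul_smul] at hβ
    rw [← sub_eq_zero, he.exp_sum_smul, Matrix.sum_smul_apply_sub_apply] at hβ
    simpa [mul_comm] using hβ
  rw [← Set.encard_le_coe_iff_finite_ncard_le]
  exact (Set.encard_le_encard hzeros).trans (encard_zeros_sum_exp_le_signChanges hx hμ)

theorem interlacing_values_le_signChanges (n d : ℕ)
    (A : Matrix (Fin n) (Fin n) ℝ) (hA : A.IsSymm)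
    (μ : Fin d → ℝ) (hμ : StrictMono μ)
    (hspec : spectrum ℝ A = Set.range μ)
    (E : Fin d → Matrix (Fin n) (Fin n) ℝ)
    (hEsymm : ∀ h, (E h).IsSymm)
    (hEidem : ∀ h, E h * E h = E h)
    (hEorth : ∀ h k, h ≠ k → E h * E k = 0)
    (hEsum : ∑ h, E h = 1)
    (hdecomp : A = ∑ h, μ h • E h)
    (i j : Fin n)
    (hnc : ¬ ∀ r : ℕ, (A ^ r) i i = (A ^ r) j j) :
    {β : ℝ | 0 < β ∧ (NormedSpace.exp (β • A)) i i = (NormedSpace.exp (β • A)) j j}.Finite ∧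
    {β : ℝ | 0 < β ∧ (NormedSpace.exp (β • A)) i i = (NormedSpace.exp (β • A)) j j}.ncard
      ≤ signChanges d (fun h => (E h) i i - (E h) j j) :=
  interlacing_values_le_signChanges_general n d A μ hμ E hEorth hEsum hdecomp i j hnc
end
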